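/- arXiv:2003.07966 — 2 statements merged into one kernel-verified Lean document; each statement's English description precedes it below -/
import Mathlib

section
/- In the reduction graph built from an undirected graph G = (V,E) with t = 6|E| copies per node and ℓ = (2t+1)t|V|+1 copies per edge (all edge probabilities equal to 1), every reverse-reachable set is either a singleton {u^v_p} for a node-copy, or equals {u^{e}_p} ∪ {u^v_1,...,u^v_t} ∪ {u^{v'}_1,...,u^{v'}_t} of size 2t+1 for an edge e = {v,v'}. -/
/-- Arc relation of the reduction graph: an arc goes from every copy `u^v_i` of a node `v` to
every copy `u^e_j` of an edge `e` with `v ∈ e`. -/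
def rArc (N t ℓ : ℕ) (E : Finset (Sym2 (Fin N))) :
    ((Fin N × Fin t) ⊕ ({e // e ∈ E} × Fin ℓ)) →
      ((Fin N × Fin t) ⊕ ({e // e ∈ E} × Fin ℓ)) → Prop
  | Sum.inl (v, _), Sum.inr (e, _) => v ∈ (e.1 : Sym2 (Fin N))
  | _, _ => False

lemma rArc_to_inl {N t ℓ : ℕ} {E : Finset (Sym2 (Fin N))} {u v p} :
    ¬ rArc N t ℓ E u (Sum.inl (v, p)) := by
  rcases u with ⟨a,b⟩ | ⟨a,b⟩ <;> exact fun h => h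

lemma reach_inl {N t ℓ : ℕ} {E : Finset (Sym2 (Fin N))} {u v p}
    (h : Relation.ReflTransGen (rArc N t ℓ E) u (Sum.inl (v, p))) : u = Sum.inl (v, p) := by
  cases h.cases_tail with
  | inl h => exact h.symm
  | inr h => exact absurd h.choose_spec.2 rArc_to_inl

lemma reach_inr {N t ℓ : ℕ} {E : Finset (Sym2 (Fin N))} {u} {e : {e // e ∈ E}} {p}
    (h : Relation.ReflTransGen (rArc N t ℓ E) u (Sum.inr (e, p))) :
    u = Sum.inr (e, p) ∨ ∃ v i, u = Sum.inl (v, i) ∧ v ∈ (e.1 : Sym2 (Fin N)) := by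
  cases h.cases_tail with
  | inl h => exact Or.inl h.symm
  | inr h =>
    obtain ⟨c, hc, harc⟩ := h
    rcases c with ⟨a, b⟩ | ⟨a, b⟩
    · exact Or.inr ⟨a, b, reach_inl hc, harc⟩
    · exact absurd harc (fun h => h)

/-- In the reduction graph built from an undirected graph `G` (with `t = 6|E|` copies per node and
`ℓ = (2t+1)t|V|+1` copies per edge, all arcs live since probabilities are 1), every
reverse-reachable set is either the singleton of a node-copy, or consists of an edge-copy of some
edge `e = {v,v'}` together with all `2t` node-copies of its endpoints, hence has size `2t+1`. -/
theorem stmt18 (N : ℕ) (G : SimpleGraph (Fin N)) [DecidableRel G.Adj]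
    (t ℓ : ℕ) (ht : t = 6 * G.edgeFinset.card) (hℓ : ℓ = (2 * t + 1) * t * N + 1)
    (w : (Fin N × Fin t) ⊕ ({e // e ∈ G.edgeFinset} × Fin ℓ)) :
    (∃ v p, w = Sum.inl (v, p) ∧
      {u | Relation.ReflTransGen (rArc N t ℓ G.edgeFinset) u w} = {w}) ∨
    (∃ (e : {e // e ∈ G.edgeFinset}) (p : Fin ℓ), w = Sum.inr (e, p) ∧
      {u | Relation.ReflTransGen (rArc N t ℓ G.edgeFinset) u w}
        = {w} ∪ {u | ∃ v i, u = Sum.inl (v, i) ∧ v ∈ (e.1 : Sym2 (Fin N))} ∧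
      ({u | Relation.ReflTransGen (rArc N t ℓ G.edgeFinset) u w}).ncard = 2 * t + 1) := by
  rcases w with ⟨v, p⟩ | ⟨e, p⟩
  · left
    refine ⟨v, p, rfl, ?_⟩
    ext u
    simp only [Set.mem_setOf_eq, Set.mem_singleton_iff]
    exact ⟨reach_inl, fun h => h ▸ Relation.ReflTransGen.refl⟩
  · right
    have hset : {u | Relation.ReflTransGen (rArc N t ℓ G.edgeFinset) u (Sum.inr (e, p))}
        = {Sum.inr (e, p)} ∪ {u | ∃ v i, u = Sum.inl (v, i) ∧ v ∈ (e.1 : Sym2 (Fin N))} := by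
      ext u
      simp only [Set.mem_setOf_eq, Set.mem_union, Set.mem_singleton_iff]
      constructor
      · exact reach_inr
      · rintro (rfl | ⟨v, i, rfl, hv⟩)
        · exact Relation.ReflTransGen.refl
        · exact Relation.ReflTransGen.single hv
    refine ⟨e, p, rfl, hset, ?_⟩
    rw [hset]
    obtain ⟨s, hs⟩ := e
    induction s using Sym2.ind with
    | _ a b =>
      have hadj : G.Adj a b := by
        rwa [SimpleGraph.mem_edgeFinset, SimpleGraph.mem_edgeSet] at hs
      have hab : a ≠ b := hadj.ne
      have h2 : {u : (Fin N × Fin t) ⊕ ({e // e ∈ G.edgeFinset} × Fin ℓ) | ∃ v i, u = Sum.inl (v, i) ∧ v ∈ (s(a, b) : Sym2 (Fin N))}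
          = Sum.inl '' (({a, b} : Set (Fin N)) ×ˢ (Set.univ : Set (Fin t))) := by
        ext u
        simp only [Set.mem_setOf_eq, Set.mem_image, Set.mem_prod, Set.mem_insert_iff,
          Set.mem_singleton_iff, Set.mem_univ, and_true, Sym2.mem_iff, Prod.exists]
        constructor
        · rintro ⟨v, i, rfl, hv⟩; exact ⟨v, i, hv, rfl⟩
        · rintro ⟨v, i, hv, rfl⟩; exact ⟨v, i, rfl, hv⟩
      simp only [h2]
      have h3 : (({a, b} : Set (Fin N)) ×ˢ (Set.univ : Set (Fin t)))
          = ↑((({a, b} : Finset (Fin N)) ×ˢ (Finset.univ : Finset (Fin t)))) := by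
        simp
      rw [Set.ncard_union_eq (by simp) (Set.toFinite _) (Set.toFinite _), Set.ncard_singleton,
        Set.ncard_image_of_injective _ Sum.inl_injective, h3, Set.ncard_coe_finset,
        Finset.card_product, Finset.card_univ, Fintype.card_fin,
        Finset.card_insert_of_notMem (by simpa using hab), Finset.card_singleton]
      ring
end

section
/- Let V̄ be the node set of the reduction graph with node-copies V̄_V and edge-copies V̄_E. For any u ∈ V̄ and S ⊆ V̄ \ {u}, adding u to S increases the influence-based Group Shapley centrality by at least 1 if u ∈ V̄_V, and by at most 1/2 if u ∈ V̄_E. -/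
open Finset

lemma termNN {α : Type*} [DecidableEq α] (R S : Finset α) :
    0 ≤ (if (R ∩ S).Nonempty then (1:ℝ)/((R \ S).card + 1) else 0) := by
  split <;> positivity

lemma termMono {α : Type*} [DecidableEq α] (R S : Finset α) (u : α) :
    (if (R ∩ S).Nonempty then (1:ℝ)/((R \ S).card + 1) else 0) ≤
    (if (R ∩ insert u S).Nonempty then (1:ℝ)/((R \ insert u S).card + 1) else 0) := by
  by_cases h : (R ∩ S).Nonempty
  · have h2 : (R ∩ insert u S).Nonempty :=
      h.mono (inter_subset_inter le_rfl (subset_insert u S))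
    rw [if_pos h, if_pos h2]
    have hc : (R \ insert u S).card ≤ (R \ S).card :=
      card_le_card (sdiff_subset_sdiff le_rfl (subset_insert u S))
    apply one_div_le_one_div_of_le
    · positivity
    · exact_mod_cast Nat.add_le_add_right hc 1
  · rw [if_neg h]; exact termNN R (insert u S)

lemma termEq {α : Type*} [DecidableEq α] {R : Finset α} {u : α} (h : u ∉ R) (S : Finset α) :
    (if (R ∩ insert u S).Nonempty then (1:ℝ)/((R \ insert u S).card + 1) else 0) =
    (if (R ∩ S).Nonempty then (1:ℝ)/((R \ S).card + 1) else 0) := by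
  have h1 : R ∩ insert u S = R ∩ S := by
    ext x; simp only [mem_inter, mem_insert]
    constructor
    · rintro ⟨hx, rfl | hx2⟩
      · exact absurd hx h
      · exact ⟨hx, hx2⟩
    · tauto
  have h2 : R \ insert u S = R \ S := by
    ext x; simp only [mem_sdiff, mem_insert]
    constructor
    · tauto
    · rintro ⟨hx, hx2⟩
      refine ⟨hx, ?_⟩
      rintro (rfl | h3)
      · exact h hx
      · exact hx2 h3
  rw [h1, h2]

lemma termBound {α : Type*} [DecidableEq α] {R S : Finset α} {u : α}
    (huR : u ∈ R) (huS : u ∉ S) (hcard : 2 ≤ R.card) :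
    (if (R ∩ insert u S).Nonempty then (1:ℝ)/((R \ insert u S).card + 1) else 0) -
    (if (R ∩ S).Nonempty then (1:ℝ)/((R \ S).card + 1) else 0) ≤ 1/2 := by
  have h2 : (R ∩ insert u S).Nonempty := ⟨u, mem_inter.2 ⟨huR, mem_insert_self u S⟩⟩
  rw [if_pos h2]
  have huRS : u ∈ R \ S := mem_sdiff.2 ⟨huR, huS⟩
  have hdiff : R \ insert u S = (R \ S).erase u := by
    ext x; simp only [mem_sdiff, mem_insert, mem_erase]; tauto
  have hk : (R \ insert u S).card = (R \ S).card - 1 := by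
    rw [hdiff, card_erase_of_mem huRS]
  have hk1 : 1 ≤ (R \ S).card := card_pos.2 ⟨u, huRS⟩
  by_cases h : (R ∩ S).Nonempty
  · rw [if_pos h]
    set k := (R \ S).card with hkdef
    have hcast : ((R \ insert u S).card : ℝ) + 1 = (k : ℝ) := by
      rw [hk]; push_cast [hk1]; ring
    rw [hcast]
    have hkr : (1:ℝ) ≤ (k:ℝ) := by exact_mod_cast hk1
    have : (1:ℝ)/(k:ℝ) - 1/((k:ℝ)+1) = 1/((k:ℝ)*((k:ℝ)+1)) := by
      field_simp
      ring
    rw [this]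
    have h3 : (2:ℝ) ≤ (k:ℝ)*((k:ℝ)+1) := by nlinarith
    exact one_div_le_one_div_of_le (by norm_num) h3
  · rw [if_neg h, sub_zero]
    have hRS : R \ S = R := by
      rw [Finset.sdiff_eq_self_iff_disjoint, disjoint_iff_inter_eq_empty,
        ← not_nonempty_iff_eq_empty]
      exact h
    have hk2 : 2 ≤ (R \ S).card := by rw [hRS]; exact hcard
    have hcast : ((R \ insert u S).card : ℝ) + 1 = ((R \ S).card : ℝ) := by
      rw [hk]; push_cast [hk1]; ring
    rw [hcast]
    have h3 : (2:ℝ) ≤ ((R \ S).card : ℝ) := by exact_mod_cast hk2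
    exact one_div_le_one_div_of_le (by norm_num) h3

/-- The edge-RR-set in the reduction graph associated with the edge-copy `u^e_p`: it consists of
`u^e_p` together with all node-copies of the endpoints of `e`. -/
def edgeRR (N t ℓ : ℕ) (E : Finset (Sym2 (Fin N))) (e : {e // e ∈ E}) (p : Fin ℓ) :
    Finset ((Fin N × Fin t) ⊕ ({e // e ∈ E} × Fin ℓ)) :=
  insert (Sum.inr (e, p))
    ((Finset.univ.filter (fun w : Fin N × Fin t => w.1 ∈ (e.1 : Sym2 (Fin N)))).image
      (fun w => Sum.inl w))

/-- The IGS centrality in the reduction graph: each node-copy contributes its singleton RR set and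
each edge-copy contributes its edge-RR-set, `φ(S) = Σ_R 1_{R∩S≠∅}/(|R\S|+1)`. -/
noncomputable def redPhi (N t ℓ : ℕ) (E : Finset (Sym2 (Fin N)))
    (S : Finset ((Fin N × Fin t) ⊕ ({e // e ∈ E} × Fin ℓ))) : ℝ :=
  (∑ w : Fin N × Fin t,
    (if (({Sum.inl w} : Finset ((Fin N × Fin t) ⊕ ({e // e ∈ E} × Fin ℓ))) ∩ S).Nonempty
      then (1 : ℝ) /
        ((({Sum.inl w} : Finset ((Fin N × Fin t) ⊕ ({e // e ∈ E} × Fin ℓ))) \ S).card + 1)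
      else 0)) +
  (∑ ep : {e // e ∈ E} × Fin ℓ,
    (if (edgeRR N t ℓ E ep.1 ep.2 ∩ S).Nonempty
      then (1 : ℝ) / ((edgeRR N t ℓ E ep.1 ep.2 \ S).card + 1)
      else 0))

/-- In the reduction graph (with `t = 6|E|` and `ℓ = (2t+1)t|V|+1`), adding a node `u` to a set
`S` increases the IGS centrality by at least 1 if `u` is a node-copy, and by at most `1/2` if `u`
is an edge-copy. -/
theorem stmt19 (N : ℕ) (G : SimpleGraph (Fin N)) [DecidableRel G.Adj]
    (t ℓ : ℕ) (ht : t = 6 * G.edgeFinset.card) (hℓ : ℓ = (2 * t + 1) * t * N + 1)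
    (u : (Fin N × Fin t) ⊕ ({e // e ∈ G.edgeFinset} × Fin ℓ))
    (S : Finset ((Fin N × Fin t) ⊕ ({e // e ∈ G.edgeFinset} × Fin ℓ))) (hu : u ∉ S) :
    ((∃ v i, u = Sum.inl (v, i)) →
      1 ≤ redPhi N t ℓ G.edgeFinset (insert u S) - redPhi N t ℓ G.edgeFinset S) ∧
    ((∃ e j, u = Sum.inr (e, j)) →
      redPhi N t ℓ G.edgeFinset (insert u S) - redPhi N t ℓ G.edgeFinset S ≤ 1 / 2) := by
  constructor
  · rintro ⟨v, i, rfl⟩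
    set u := (Sum.inl (v, i) : (Fin N × Fin t) ⊕ ({e // e ∈ G.edgeFinset} × Fin ℓ)) with hudef
    rw [redPhi, redPhi]
    have hB : (∑ ep : {e // e ∈ G.edgeFinset} × Fin ℓ,
        (if (edgeRR N t ℓ G.edgeFinset ep.1 ep.2 ∩ S).Nonempty
          then (1 : ℝ) / ((edgeRR N t ℓ G.edgeFinset ep.1 ep.2 \ S).card + 1) else 0)) ≤
        (∑ ep : {e // e ∈ G.edgeFinset} × Fin ℓ,
        (if (edgeRR N t ℓ G.edgeFinset ep.1 ep.2 ∩ insert u S).Nonempty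
          then (1 : ℝ) / ((edgeRR N t ℓ G.edgeFinset ep.1 ep.2 \ insert u S).card + 1) else 0)) :=
      Finset.sum_le_sum (fun ep _ => termMono _ S u)
    have hA : (∑ w : Fin N × Fin t,
        (if (({Sum.inl w} : Finset ((Fin N × Fin t) ⊕ ({e // e ∈ G.edgeFinset} × Fin ℓ))) ∩ S).Nonempty
          then (1 : ℝ) / ((({Sum.inl w} : Finset ((Fin N × Fin t) ⊕ ({e // e ∈ G.edgeFinset} × Fin ℓ))) \ S).card + 1)
          else 0)) + 1 ≤
        (∑ w : Fin N × Fin t,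
        (if (({Sum.inl w} : Finset ((Fin N × Fin t) ⊕ ({e // e ∈ G.edgeFinset} × Fin ℓ))) ∩ insert u S).Nonempty
          then (1 : ℝ) / ((({Sum.inl w} : Finset ((Fin N × Fin t) ⊕ ({e // e ∈ G.edgeFinset} × Fin ℓ))) \ insert u S).card + 1)
          else 0)) := by
      have key : ∀ w : Fin N × Fin t,
          (if (({Sum.inl w} : Finset ((Fin N × Fin t) ⊕ ({e // e ∈ G.edgeFinset} × Fin ℓ))) ∩ S).Nonempty
            then (1 : ℝ) / ((({Sum.inl w} : Finset ((Fin N × Fin t) ⊕ ({e // e ∈ G.edgeFinset} × Fin ℓ))) \ S).card + 1)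
            else 0) + (if w = (v, i) then (1:ℝ) else 0) ≤
          (if (({Sum.inl w} : Finset ((Fin N × Fin t) ⊕ ({e // e ∈ G.edgeFinset} × Fin ℓ))) ∩ insert u S).Nonempty
            then (1 : ℝ) / ((({Sum.inl w} : Finset ((Fin N × Fin t) ⊕ ({e // e ∈ G.edgeFinset} × Fin ℓ))) \ insert u S).card + 1)
            else 0) := by
        intro w
        by_cases hw : w = (v, i)
        · subst hw
          rw [if_pos rfl]
          have hbef : (({u} : Finset ((Fin N × Fin t) ⊕ ({e // e ∈ G.edgeFinset} × Fin ℓ))) ∩ S) = ∅ :=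
            Finset.singleton_inter_of_notMem hu
          have haft : (({u} : Finset ((Fin N × Fin t) ⊕ ({e // e ∈ G.edgeFinset} × Fin ℓ))) ∩ insert u S).Nonempty :=
            ⟨u, by simp⟩
          have hsd : (({u} : Finset ((Fin N × Fin t) ⊕ ({e // e ∈ G.edgeFinset} × Fin ℓ))) \ insert u S) = ∅ :=
            Finset.sdiff_eq_empty_iff_subset.2
              (Finset.singleton_subset_iff.2 (Finset.mem_insert_self u S))
          rw [if_neg (by simpa [hudef] using hbef), if_pos haft, hsd]
          norm_num
        · rw [if_neg hw, add_zero]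
          exact termMono _ S u
      calc _ = ∑ w : Fin N × Fin t,
          ((if (({Sum.inl w} : Finset ((Fin N × Fin t) ⊕ ({e // e ∈ G.edgeFinset} × Fin ℓ))) ∩ S).Nonempty
            then (1 : ℝ) / ((({Sum.inl w} : Finset ((Fin N × Fin t) ⊕ ({e // e ∈ G.edgeFinset} × Fin ℓ))) \ S).card + 1)
            else 0) + (if w = (v, i) then (1:ℝ) else 0)) := by
            rw [Finset.sum_add_distrib, Finset.sum_ite_eq' Finset.univ (v, i) (fun _ => (1:ℝ))]
            simp
        _ ≤ _ := Finset.sum_le_sum (fun w _ => key w)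
    linarith
  · rintro ⟨e, j, rfl⟩
    set u := (Sum.inr (e, j) : (Fin N × Fin t) ⊕ ({e // e ∈ G.edgeFinset} × Fin ℓ)) with hudef
    rw [redPhi, redPhi]
    have hA : (∑ w : Fin N × Fin t,
        (if (({Sum.inl w} : Finset ((Fin N × Fin t) ⊕ ({e // e ∈ G.edgeFinset} × Fin ℓ))) ∩ insert u S).Nonempty
          then (1 : ℝ) / ((({Sum.inl w} : Finset ((Fin N × Fin t) ⊕ ({e // e ∈ G.edgeFinset} × Fin ℓ))) \ insert u S).card + 1)
          else 0)) =
        (∑ w : Fin N × Fin t,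
        (if (({Sum.inl w} : Finset ((Fin N × Fin t) ⊕ ({e // e ∈ G.edgeFinset} × Fin ℓ))) ∩ S).Nonempty
          then (1 : ℝ) / ((({Sum.inl w} : Finset ((Fin N × Fin t) ⊕ ({e // e ∈ G.edgeFinset} × Fin ℓ))) \ S).card + 1)
          else 0)) :=
      Finset.sum_congr rfl (fun w _ => termEq (by simp [hudef]) S)
    have ht1 : 1 ≤ t := by
      have : 0 < G.edgeFinset.card := Finset.card_pos.2 ⟨e.1, e.2⟩
      omega
    have hb : u ∈ edgeRR N t ℓ G.edgeFinset e j := Finset.mem_insert_self _ _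
    have hcard : 2 ≤ (edgeRR N t ℓ G.edgeFinset e j).card := by
      have hv0 : (e.1 : Sym2 (Fin N)).out.1 ∈ (e.1 : Sym2 (Fin N)) := Sym2.out_fst_mem _
      have ha : (Sum.inl ((e.1 : Sym2 (Fin N)).out.1, (⟨0, ht1⟩ : Fin t)) :
          (Fin N × Fin t) ⊕ ({e // e ∈ G.edgeFinset} × Fin ℓ)) ∈ edgeRR N t ℓ G.edgeFinset e j := by
        apply Finset.mem_insert_of_mem
        exact Finset.mem_image.2 ⟨((e.1 : Sym2 (Fin N)).out.1, ⟨0, ht1⟩),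
          Finset.mem_filter.2 ⟨Finset.mem_univ _, hv0⟩, rfl⟩
      have hne : (Sum.inl ((e.1 : Sym2 (Fin N)).out.1, (⟨0, ht1⟩ : Fin t)) :
          (Fin N × Fin t) ⊕ ({e // e ∈ G.edgeFinset} × Fin ℓ)) ≠ u := by simp [hudef]
      exact Finset.one_lt_card.2 ⟨_, ha, _, hb, hne⟩
    have hB : (∑ ep : {e // e ∈ G.edgeFinset} × Fin ℓ,
        (if (edgeRR N t ℓ G.edgeFinset ep.1 ep.2 ∩ insert u S).Nonempty
          then (1 : ℝ) / ((edgeRR N t ℓ G.edgeFinset ep.1 ep.2 \ insert u S).card + 1) else 0)) -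
        (∑ ep : {e // e ∈ G.edgeFinset} × Fin ℓ,
        (if (edgeRR N t ℓ G.edgeFinset ep.1 ep.2 ∩ S).Nonempty
          then (1 : ℝ) / ((edgeRR N t ℓ G.edgeFinset ep.1 ep.2 \ S).card + 1) else 0)) ≤ 1 / 2 := by
      rw [← Finset.sum_sub_distrib]
      have key : ∀ ep : {e // e ∈ G.edgeFinset} × Fin ℓ,
          (if (edgeRR N t ℓ G.edgeFinset ep.1 ep.2 ∩ insert u S).Nonempty
            then (1 : ℝ) / ((edgeRR N t ℓ G.edgeFinset ep.1 ep.2 \ insert u S).card + 1) else 0) -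
          (if (edgeRR N t ℓ G.edgeFinset ep.1 ep.2 ∩ S).Nonempty
            then (1 : ℝ) / ((edgeRR N t ℓ G.edgeFinset ep.1 ep.2 \ S).card + 1) else 0) ≤
          (if ep = (e, j) then (1:ℝ)/2 else 0) := by
        intro ep
        by_cases hep : ep = (e, j)
        · subst hep
          rw [if_pos rfl]
          exact termBound hb hu hcard
        · rw [if_neg hep]
          have hnot : u ∉ edgeRR N t ℓ G.edgeFinset ep.1 ep.2 := by
            simp only [edgeRR, Finset.mem_insert, Finset.mem_image, hudef]
            push_neg
            constructor
            · intro hcon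
              apply hep
              have h' := Sum.inr.inj hcon
              simp only [Prod.ext_iff, Prod.mk.injEq] at h' ⊢
              exact ⟨h'.1.symm, h'.2.symm⟩
            · intro w _ hcon
              exact absurd hcon (by simp)
          rw [termEq hnot S, sub_self]
      calc _ ≤ ∑ ep : {e // e ∈ G.edgeFinset} × Fin ℓ, (if ep = (e, j) then (1:ℝ)/2 else 0) :=
            Finset.sum_le_sum (fun ep _ => key ep)
        _ = 1/2 := by rw [Finset.sum_ite_eq' Finset.univ (e, j) (fun _ => (1:ℝ)/2)]; simp
    linarith [hA]
end
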